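/- If z ∈ {2, 2u, 2u²}, then for every m ≥ 1 the minimum Hamming weight of a nonzero codeword of R(1,m) is exactly 2^{m-1}: every nonzero c ∈ R(1,m) has at least 2^{m-1} nonzero coordinates, and some nonzero codeword has exactly 2^{m-1} nonzero coordinates. Consequently, the minimum Hamming distance between distinct codewords of R(1,m) equals 2^{m-1}. -/
import Mathlib


open Polynomial

noncomputable section

/-- The ring `R = ℤ₄[u]/(u³ − 1)`. -/
abbrev R : Type := Polynomial (ZMod 4) ⧸ Ideal.span ({Polynomial.X ^ 3 - 1} : Set (Polynomial (ZMod 4)))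

/-- The image `u` of the variable in `R`. -/
def u : R := Ideal.Quotient.mk _ Polynomial.X

instance : DecidableEq R := Classical.decEq R

lemma u_pow_three : u ^ 3 = 1 := by
  have h : (Ideal.Quotient.mk (Ideal.span ({Polynomial.X ^ 3 - 1} : Set (Polynomial (ZMod 4))))
      (Polynomial.X ^ 3 - 1) : R) = 0 :=
    Ideal.Quotient.eq_zero_iff_mem.mpr (Ideal.subset_span rfl)
  have h2 : (u ^ 3 - 1 : R) = 0 := by
    simpa [u, map_sub, map_pow] using h
  linear_combination h2

/-- The ring automorphism `σ` of `R` determined by `σ(u) = u²`. -/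
def sigmaR : R →+* R :=
  Ideal.Quotient.lift _ (Polynomial.aeval (u ^ 2)).toRingHom (by
    intro p hp
    obtain ⟨q, rfl⟩ := Ideal.mem_span_singleton.mp hp
    have h6 : ((u ^ 2) ^ 3 : R) = 1 := by
      rw [← pow_mul]
      have : (u : R) ^ (2 * 3) = (u ^ 3) ^ 2 := by ring
      rw [this, u_pow_three, one_pow]
    simp [map_mul, map_sub, map_pow, h6])

/-- The element `δ = 2 + 2u + 2u²` of `R`. -/
def δR : R := 2 + 2 * u + 2 * u ^ 2

/-- The map `ρ : Rⁿ → Rⁿ`, reversing coordinates and applying `σ` coordinatewise. -/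
def ρmap (n : ℕ) (x : Fin n → R) : Fin n → R := fun i => sigmaR (x (Fin.rev i))

/-- The 4-letter DNA alphabet. -/
inductive DNA : Type
  | A | C | G | T
deriving DecidableEq, Inhabited, Repr

/-- Watson–Crick complement of a DNA nucleotide. -/
def DNA.compl : DNA → DNA
  | .A => .T
  | .T => .A
  | .C => .G
  | .G => .C

/-- Complement of a DNA string. -/
def complStr (s : List DNA) : List DNA := s.map DNA.compl

/-- Reverse of a DNA string. -/
def revStr (s : List DNA) : List DNA := s.reverse

/-- Reverse-complement of a DNA string. -/
def rcStr (s : List DNA) : List DNA := s.reverse.map DNA.compl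

/-- Hamming distance between two DNA strings (of equal length). -/
def dH (s t : List DNA) : ℕ := ((s.zip t).filter fun p => p.1 ≠ p.2).length

/-- GC-content of a DNA string: the number of positions carrying `G` or `C`. -/
def gcContent (s : List DNA) : ℕ := (s.filter fun d => d = DNA.G ∨ d = DNA.C).length

/-- A DNA string has no homopolymer run of length greater than `2` iff it has no three
consecutive equal symbols. -/
def NoHomopolymer3 (s : List DNA) : Prop := ¬ ∃ (l r : List DNA) (a : DNA), s = l ++ [a, a, a] ++ r

/-- Blockwise extension of a map `ψ : R → Σ³` to vectors over `R`, by concatenation. -/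
def Ψ (ψ : R → List DNA) {n : ℕ} (x : Fin n → R) : List DNA := (List.ofFn x).flatMap ψ

/-- The map `ψ₂` from the ideal `2R` to DNA strings of length `3`
(the restriction of the DNA map of Table I to `2R`; its value outside `2R` is irrelevant). -/
def ψ₂ (x : R) : List DNA :=
  if x = 0 then [.G, .A, .G]
  else if x = 2 then [.C, .G, .A]
  else if x = 2 * u then [.G, .T, .G]
  else if x = 2 * u ^ 2 then [.A, .G, .C]
  else if x = 2 + 2 * u then [.T, .C, .G]
  else if x = 2 + 2 * u ^ 2 then [.C, .A, .C]
  else if x = 2 * u + 2 * u ^ 2 then [.G, .C, .T]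
  else [.C, .T, .C]

/-- The rows of the Reed–Muller type generator matrix `G_{1,m}` over `R` (with parameter `z`):
`Gmat z m i j` is the entry of `G_{1,m}` in row `i` and column `j`.  Here `G_{1,0} = [z]` and
`G_{1,m+1} = [[G_{1,m}, G_{1,m}], [0 … 0, z … z]]`, which for `m = 1` gives
`G_{1,1} = [[z,z],[0,z]]`. -/
def Gmat (z : R) : (m : ℕ) → Fin (m + 1) → Fin (2 ^ m) → R
  | 0, _, _ => z
  | m + 1, i, j =>
    if hi : (i : ℕ) < m + 1 then
      Gmat z m ⟨i, hi⟩ ⟨(j : ℕ) % 2 ^ m, Nat.mod_lt _ (Nat.two_pow_pos m)⟩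
    else if (j : ℕ) < 2 ^ m then 0 else z

/-- The Reed–Muller type code `R(1,m)`: the `R`-submodule of `R^{2^m}` generated by the rows
of `G_{1,m}`. -/
def RM (z : R) (m : ℕ) : Submodule R (Fin (2 ^ m) → R) := Submodule.span R (Set.range (Gmat z m))

/-- Hamming weight of a vector over `R`. -/
def wt {N : ℕ} (c : Fin N → R) : ℕ := (Finset.univ.filter fun j => c j ≠ 0).card

/-- Hamming distance between two vectors over `R`. -/
def hdistR {N : ℕ} (c c' : Fin N → R) : ℕ := (Finset.univ.filter fun j => c j ≠ c' j).card

/-- Coordinate reversal of a vector over `R`. -/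
def revVec {N : ℕ} (c : Fin N → R) : Fin N → R := fun j => c (Fin.rev j)

/-- `a + bu + cu²` as an element of `R`, for `a, b, c ∈ ℤ₄`. -/
def toR (a b c : ZMod 4) : R :=
  algebraMap (ZMod 4) R a + algebraMap (ZMod 4) R b * u + algebraMap (ZMod 4) R c * u ^ 2

end

noncomputable section

def Brow (m : ℕ) (i : Fin (m+1)) (j : Fin (2^m)) : R :=
  if (i : ℕ) = 0 then 1 else if Nat.testBit (j : ℕ) ((i : ℕ) - 1) then 1 else 0

lemma Gmat_eq (z : R) : ∀ (m : ℕ) (i : Fin (m+1)) (j : Fin (2^m)), Gmat z m i j = z * Brow m i j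
  | 0, i, j => by
    have h0 : (i : ℕ) = 0 := by omega
    simp [Gmat, Brow, h0]
  | m+1, i, j => by
    by_cases hi : (i : ℕ) < m + 1
    · rw [show Gmat z (m+1) i j
        = Gmat z m ⟨i, hi⟩ ⟨(j : ℕ) % 2 ^ m, Nat.mod_lt _ (Nat.two_pow_pos m)⟩ from by
          simp [Gmat, hi]]
      rw [Gmat_eq z m]
      congr 1
      unfold Brow
      by_cases h0 : (i : ℕ) = 0
      · simp [h0]
      · have hlt : (i : ℕ) - 1 < m := by omega
        simp only [h0, if_false, Nat.testBit_mod_two_pow, hlt, decide_true, Bool.true_and]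
    · have hi' : (i : ℕ) = m + 1 := by omega
      rw [show Gmat z (m+1) i j = if (j : ℕ) < 2 ^ m then 0 else z from by simp [Gmat, hi]]
      have h0 : ¬ ((i : ℕ) = 0) := by omega
      have hi1 : (i : ℕ) - 1 = m := by omega
      unfold Brow
      rw [if_neg h0, hi1]
      by_cases hj : (j : ℕ) < 2 ^ m
      · rw [Nat.testBit_lt_two_pow hj]; simp [hj]
      · have hdiv : (j : ℕ) / 2 ^ m = 1 := by
          have h2 : (j : ℕ) < 2 ^ (m+1) := j.isLt
          have : 2 ^ (m+1) = 2 * 2 ^ m := by ring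
          exact Nat.div_eq_of_lt_le (by omega) (by omega)
        have : Nat.testBit (j : ℕ) m = true := by
          rw [Nat.testBit_eq_decide_div_mod_eq, hdiv]; decide
        rw [this]; simp [hj]

def phiR : R →+* ZMod 4 :=
  Ideal.Quotient.lift _ (Polynomial.aeval (1 : ZMod 4)).toRingHom (by
    intro p hp
    obtain ⟨q, rfl⟩ := Ideal.mem_span_singleton.mp hp
    simp)

lemma phiR_u : phiR u = 1 := by
  simp [phiR, u]

end

noncomputable section

lemma wt_lower (z w w' : R) (hw : z = 2 * w) (hww : w * w' = 1) (m : ℕ)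
    (c : Fin (2^m) → R) (hc : c ∈ RM z m) (hc0 : c ≠ 0) : 2^(m-1) ≤ wt c := by
  classical
  obtain ⟨a, ha⟩ := (Submodule.mem_span_range_iff_exists_fun R).mp hc
  have hzx : ∀ x : R, z * x = 0 ↔ 2 * x = 0 := by
    intro x
    constructor
    · intro h
      calc 2 * x = w' * (z * x) := by rw [hw]; linear_combination (-(2 : R) * x) * hww
        _ = 0 := by rw [h, mul_zero]
    · intro h
      calc z * x = w * (2 * x) := by rw [hw]; ring
        _ = 0 := by rw [h, mul_zero]
  set b : Fin (m+1) → R := fun i => 2 * a i with hb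
  set g : Fin (2^m) → R := fun j => ∑ i, b i * Brow m i j with hg
  have hcg : ∀ j, (c j = 0 ↔ g j = 0) := by
    intro j
    have hcj : c j = z * ∑ i, a i * Brow m i j := by
      rw [← ha]
      simp only [Finset.sum_apply, Pi.smul_apply, smul_eq_mul, Finset.mul_sum]
      refine Finset.sum_congr rfl fun i _ => ?_
      rw [Gmat_eq]; ring
    have hgj : g j = 2 * ∑ i, a i * Brow m i j := by
      simp only [hg, hb, Finset.mul_sum]
      refine Finset.sum_congr rfl fun i _ => ?_
      ring
    rw [hcj, hgj]
    exact hzx _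
  by_cases hcase : ∀ k : Fin m, b k.succ = 0
  · have hgconst : ∀ j, g j = b 0 := by
      intro j
      simp only [hg]
      rw [Fin.sum_univ_succ]
      have h1 : Brow m 0 j = 1 := by simp [Brow]
      rw [h1, mul_one]
      have hz' : ∀ k ∈ Finset.univ, b (Fin.succ k) * Brow m k.succ j = 0 := fun k _ => by
        rw [hcase k, zero_mul]
      rw [Finset.sum_congr rfl hz', Finset.sum_const, smul_zero, add_zero]
    by_cases hb0 : b 0 = 0
    · exact absurd (funext fun j => (hcg j).mpr (by rw [hgconst j, hb0])) hc0
    · have hall : ∀ j, c j ≠ 0 := fun j h => hb0 (by rw [← hgconst j]; exact (hcg j).mp h)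
      have : wt c = 2 ^ m := by
        unfold wt
        rw [Finset.filter_true_of_mem (fun j _ => hall j), Finset.card_univ, Fintype.card_fin]
      rw [this]
      exact Nat.pow_le_pow_right (by norm_num) (Nat.sub_le m 1)
  · push_neg at hcase
    obtain ⟨k, hk⟩ := hcase
    have hm1 : 1 ≤ m := k.pos
    have ht : 2 ^ (k : ℕ) < 2 ^ m := Nat.pow_lt_pow_right (by norm_num) k.isLt
    set σf : Fin (2^m) → Fin (2^m) :=
      fun j => ⟨(j : ℕ) ^^^ 2 ^ (k : ℕ), Nat.xor_lt_two_pow j.isLt ht⟩ with hσ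
    have hσσ : ∀ j, σf (σf j) = j := by
      intro j
      apply Fin.ext
      simp [hσ, Nat.xor_assoc]
    have hbit : ∀ (j : Fin (2^m)) (i : ℕ), i ≠ (k : ℕ) →
        Nat.testBit ((σf j : Fin (2^m)) : ℕ) i = Nat.testBit (j : ℕ) i := by
      intro j i hi
      simp [hσ, Nat.testBit_xor, Nat.testBit_two_pow, Ne.symm hi]
    have hbitk : ∀ j : Fin (2^m),
        Nat.testBit ((σf j : Fin (2^m)) : ℕ) (k : ℕ) = ! Nat.testBit (j : ℕ) (k : ℕ) := by
      intro j
      simp [hσ, Nat.testBit_xor, Nat.testBit_two_pow]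
    have hBrow : ∀ (j) (i : Fin (m+1)), i ≠ k.succ → Brow m i (σf j) = Brow m i j := by
      intro j i hi
      unfold Brow
      by_cases h0 : (i : ℕ) = 0
      · simp [h0]
      · have hne : (i : ℕ) - 1 ≠ (k : ℕ) := by
          intro h
          apply hi
          apply Fin.ext
          simp only [Fin.val_succ]
          omega
        rw [hbit j _ hne]
    have hgflip : ∀ j, g (σf j) - g j = b k.succ ∨ g (σf j) - g j = - b k.succ := by
      intro j
      have hsum : g (σf j) - g j = ∑ i, b i * (Brow m i (σf j) - Brow m i j) := by
        simp only [hg]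
        rw [← Finset.sum_sub_distrib]
        refine Finset.sum_congr rfl fun i _ => ?_
        ring
      rw [hsum, Finset.sum_eq_single k.succ]
      · have hk0 : ¬ ((k.succ : Fin (m+1)) : ℕ) = 0 := by simp [Fin.val_succ]
        have hk1 : ((k.succ : Fin (m+1)) : ℕ) - 1 = (k : ℕ) := by simp [Fin.val_succ]
        unfold Brow
        rw [if_neg hk0, if_neg hk0, hk1, hbitk j]
        cases h : Nat.testBit (j : ℕ) (k : ℕ)
        · left
          rw [if_pos (by simp : (!false) = true), if_neg (by simp : ¬ (false = true))]
          ring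
        · right
          rw [if_neg (by simp : ¬ ((!true) = true)), if_pos rfl]
          ring
      · intro i _ hi
        rw [hBrow j i hi, sub_self, mul_zero]
      · intro h
        exact absurd (Finset.mem_univ _) h
    have hgne : ∀ j, g (σf j) ≠ g j := by
      intro j h
      rcases hgflip j with h' | h' <;> rw [h, sub_self] at h'
      · exact hk h'.symm
      · exact hk (neg_eq_zero.mp h'.symm)
    set W : Finset (Fin (2^m)) := Finset.univ.filter (fun j => c j ≠ 0) with hW
    set Z : Finset (Fin (2^m)) := Finset.univ.filter (fun j => ¬ c j ≠ 0) with hZ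
    have hcard : W.card + Z.card = 2 ^ m := by
      rw [hW, hZ, Finset.card_filter_add_card_filter_not, Finset.card_univ,
        Fintype.card_fin]
    have hmaps : ∀ j ∈ Z, σf j ∈ W := by
      intro j hj
      simp only [hZ, Finset.mem_filter, not_not] at hj
      simp only [hW, Finset.mem_filter]
      refine ⟨Finset.mem_univ _, fun h => ?_⟩
      exact hgne j (by rw [(hcg _).mp h, (hcg j).mp hj.2])
    have hinj : Set.InjOn σf Z := by
      intro x _ y _ h
      rw [← hσσ x, h, hσσ]
    have hZW : Z.card ≤ W.card := Finset.card_le_card_of_injOn σf hmaps hinj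
    have h2 : 2 ^ m = 2 * 2 ^ (m-1) := by
      conv_lhs => rw [show m = (m-1)+1 by omega]
      rw [pow_succ]; ring
    have hwt : wt c = W.card := rfl
    omega

end

noncomputable section

lemma wt_row1 (z : R) (hz0 : z ≠ 0) (m : ℕ) (hm : 1 ≤ m) :
    wt (Gmat z m 1) = 2 ^ (m-1) := by
  classical
  have h1v : ((1 : Fin (m+1)) : ℕ) = 1 := by
    rw [Fin.val_one']; exact Nat.mod_eq_of_lt (by omega)
  have entry : ∀ j : Fin (2^m), Gmat z m 1 j = if Nat.testBit (j : ℕ) 0 then z else 0 := by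
    intro j
    rw [Gmat_eq]
    unfold Brow
    rw [h1v]
    norm_num
  have hcnd : ∀ j : Fin (2^m), (Gmat z m 1 j ≠ 0 ↔ Nat.testBit (j : ℕ) 0 = true) := by
    intro j
    rw [entry j]
    cases h : Nat.testBit (j : ℕ) 0 <;> simp [h, hz0]
  have ht : (1:ℕ) < 2 ^ m := Nat.one_lt_two_pow (by omega)
  set σf : Fin (2^m) → Fin (2^m) := fun j => ⟨(j:ℕ) ^^^ 1, Nat.xor_lt_two_pow j.isLt ht⟩ with hσ
  have hσσ : ∀ j, σf (σf j) = j := by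
    intro j
    apply Fin.ext
    show ((j:ℕ) ^^^ 1) ^^^ 1 = (j:ℕ)
    rw [Nat.xor_assoc]
    simp
  have hbitk : ∀ j : Fin (2^m),
      Nat.testBit ((σf j : Fin (2^m)) : ℕ) 0 = ! Nat.testBit (j:ℕ) 0 := by
    intro j
    show Nat.testBit ((j:ℕ) ^^^ 1) 0 = _
    rw [Nat.testBit_xor]
    have h1 : Nat.testBit 1 0 = true := rfl
    rw [h1]
    cases h : Nat.testBit (j:ℕ) 0 <;> rfl
  set W := Finset.univ.filter (fun j : Fin (2^m) => Gmat z m 1 j ≠ 0) with hW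
  set Z := Finset.univ.filter (fun j : Fin (2^m) => ¬ Gmat z m 1 j ≠ 0) with hZ
  have hcard : W.card + Z.card = 2 ^ m := by
    rw [hW, hZ, Finset.card_filter_add_card_filter_not, Finset.card_univ,
      Fintype.card_fin]
  have hinj : ∀ (s : Finset (Fin (2^m))), Set.InjOn σf s := by
    intro s x _ y _ h
    rw [← hσσ x, h, hσσ y]
  have hZtoW : ∀ j ∈ Z, σf j ∈ W := by
    intro j hj
    simp only [hZ, Finset.mem_filter, not_not] at hj
    simp only [hW, Finset.mem_filter]
    refine ⟨Finset.mem_univ _, ?_⟩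
    rw [hcnd, hbitk]
    cases h : Nat.testBit (j : ℕ) 0
    · simp
    · rw [entry j, h] at hj
      exact absurd hj.2 (by simpa using hz0)
  have hWtoZ : ∀ j ∈ W, σf j ∈ Z := by
    intro j hj
    simp only [hW, Finset.mem_filter] at hj
    simp only [hZ, Finset.mem_filter, not_not]
    refine ⟨Finset.mem_univ _, ?_⟩
    have hbt : Nat.testBit (j : ℕ) 0 = true := (hcnd j).mp hj.2
    rw [entry (σf j), hbitk, hbt]
    simp
  have hZW : Z.card ≤ W.card := Finset.card_le_card_of_injOn σf hZtoW (hinj Z)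
  have hWZ : W.card ≤ Z.card := Finset.card_le_card_of_injOn σf hWtoZ (hinj W)
  have h2 : 2 ^ m = 2 * 2 ^ (m-1) := by
    conv_lhs => rw [show m = (m-1)+1 by omega]
    rw [pow_succ]; ring
  have hwt : wt (Gmat z m 1) = W.card := rfl
  omega

/-- If `z ∈ {2, 2u, 2u²}`, the minimum Hamming weight of a nonzero codeword of `R(1,m)` is
exactly `2^{m-1}`; consequently the minimum Hamming distance between distinct codewords equals
`2^{m-1}`. -/
theorem stmt16 (z : R) (hz : z ∈ ({2, 2 * u, 2 * u ^ 2} : Set R)) (m : ℕ) (hm : 1 ≤ m) :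
    (∀ c ∈ RM z m, c ≠ 0 → 2 ^ (m - 1) ≤ wt c) ∧
    (∃ c ∈ RM z m, c ≠ 0 ∧ wt c = 2 ^ (m - 1)) ∧
    (∀ c ∈ RM z m, ∀ c' ∈ RM z m, c ≠ c' → 2 ^ (m - 1) ≤ hdistR c c') ∧
    (∃ c ∈ RM z m, ∃ c' ∈ RM z m, c ≠ c' ∧ hdistR c c' = 2 ^ (m - 1)) := by
  classical
  simp only [Set.mem_insert_iff, Set.mem_singleton_iff] at hz
  have hz2 : phiR z = 2 := by
    rcases hz with rfl | rfl | rfl <;> simp [map_mul, map_pow, phiR_u, map_ofNat]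
  have hz0 : z ≠ 0 := by
    intro h
    rw [h, map_zero] at hz2
    exact absurd hz2.symm (by decide)
  obtain ⟨w, w', hw, hww⟩ : ∃ w w' : R, z = 2 * w ∧ w * w' = 1 := by
    rcases hz with rfl | rfl | rfl
    · exact ⟨1, 1, by ring, by ring⟩
    · exact ⟨u, u^2, rfl, by rw [show u * u^2 = u^3 by ring, u_pow_three]⟩
    · exact ⟨u^2, u, rfl, by rw [show u^2 * u = u^3 by ring, u_pow_three]⟩
  have lower : ∀ c ∈ RM z m, c ≠ 0 → 2 ^ (m-1) ≤ wt c :=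
    fun c hc hc0 => wt_lower z w w' hw hww m c hc hc0
  have hrow : Gmat z m 1 ∈ RM z m := Submodule.subset_span ⟨1, rfl⟩
  have h1v : ((1 : Fin (m+1)) : ℕ) = 1 := by
    rw [Fin.val_one']; exact Nat.mod_eq_of_lt (by omega)
  have hrne : Gmat z m 1 ≠ 0 := by
    intro h
    have h1lt : (1:ℕ) < 2 ^ m := Nat.one_lt_two_pow (by omega)
    have h2 := congrFun h ⟨1, h1lt⟩
    rw [Gmat_eq] at h2
    unfold Brow at h2
    rw [h1v] at h2
    simp at h2
    exact hz0 h2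
  have hwt1 := wt_row1 z hz0 m hm
  refine ⟨lower, ⟨Gmat z m 1, hrow, hrne, hwt1⟩, ?_, ?_⟩
  · intro c hc c' hc' hne
    have hsub : c - c' ∈ RM z m := Submodule.sub_mem _ hc hc'
    have h0 : c - c' ≠ 0 := sub_ne_zero.mpr hne
    have hd : hdistR c c' = wt (c - c') := by
      unfold hdistR wt
      congr 1
      apply Finset.filter_congr
      intro j _
      rw [Pi.sub_apply, ne_eq, ne_eq, sub_eq_zero]
    rw [hd]
    exact lower _ hsub h0
  · refine ⟨Gmat z m 1, hrow, 0, (RM z m).zero_mem, hrne, ?_⟩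
    have hd : hdistR (Gmat z m 1) (0 : Fin (2^m) → R) = wt (Gmat z m 1) := rfl
    rw [hd, hwt1]

end
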